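/- arXiv:1704.08857 — 3 statements merged into one kernel-verified Lean document; each statement's English description precedes it below -/
import Mathlib

section
/- Let k be a complex number with Im k > 0, let y_s ∈ ℝ², and let φ : ℝ² → ℂ be bounded and continuous. Then lim_{s → 0⁺} ∫_{ℝ²} k/(2πis) · exp( i k |y − y_s|² / (2s) ) · φ(y) dy = φ(y_s). (The parabolic Green's function acts as an approximate identity as the observation plane approaches the source plane.) -/
open Complex Real MeasureTheory Filter Topology

/-! The kernel is self-similar: `s * g_s (√s • x) = g_1 x`, so the substitution `y = ys + √s • x`
turns the integral into `∫ g_1 x * φ (ys + √s • x) dx`. For `Im k > 0`, `g_1` is a complex Gaussian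
`cexp (-b ‖x‖²)` with `re b = Im k / 2 > 0`, hence integrable with `∫ g_1 = 1`, and dominated
convergence (dominator `‖g_1‖ * sup ‖φ‖`) gives the limit `φ ys` as `√s → 0`. -/

theorem tendsto_integral_mul_comp_add_smul {E 𝕜 : Type*} [NormedAddCommGroup E]
    [NormedSpace ℝ E] [MeasurableSpace E] [OpensMeasurableSpace E] [RCLike 𝕜] {μ : Measure E}
    {G φ : E → 𝕜} (hG : Integrable G μ)
    (hφ : Continuous φ) {C : ℝ} (hC : ∀ y, ‖φ y‖ ≤ C) (a : E) :
    Tendsto (fun t : ℝ => ∫ x, G x * φ (a + t • x) ∂μ) (𝓝 0) (𝓝 ((∫ x, G x ∂μ) * φ a)) := by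
  rw [← integral_mul_const]
  refine tendsto_integral_filter_of_dominated_convergence (fun x => ‖G x‖ * C)
    (.of_forall fun t => hG.aestronglyMeasurable.mul (hφ.comp (by fun_prop)).aestronglyMeasurable)
    (.of_forall fun t => .of_forall fun x => ?_) (hG.norm.mul_const C)
    (.of_forall fun x => tendsto_const_nhds.mul ?_)
  · rw [norm_mul]
    exact mul_le_mul_of_nonneg_left (hC _) (norm_nonneg _)
  · have : Tendsto (fun t : ℝ => a + t • x) (𝓝 0) (𝓝 a) := by
      simpa using (Continuous.tendsto (by fun_prop : Continuous fun t : ℝ => a + t • x) 0)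
    exact (hφ.tendsto a).comp this

theorem integral_eq_pow_smul_integral_comp_add_smul {E F : Type*} [NormedAddCommGroup E]
    [NormedSpace ℝ E] [MeasurableSpace E] [BorelSpace E] [FiniteDimensional ℝ E]
    (μ : Measure E) [μ.IsAddHaarMeasure] [NormedAddCommGroup F] [NormedSpace ℝ F]
    (f : E → F) (a : E) {t : ℝ} (ht : 0 < t) :
    ∫ y, f y ∂μ = t ^ Module.finrank ℝ E • ∫ x, f (a + t • x) ∂μ := by
  rw [Measure.integral_comp_smul_of_nonneg μ (fun x => f (a + x)) t (hR := ht.le),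
    integral_add_left_eq_self, smul_smul, mul_inv_cancel₀ (pow_pos ht _).ne', one_smul]

local notation "𝕍" => EuclideanSpace ℝ (Fin 2)

/-- The paper's `g(x, y; x_s, y_s)` is `parabolicGreen k (x - x_s) (y - y_s)`. -/
noncomputable def parabolicGreen (k : ℂ) (s : ℝ) (y : 𝕍) : ℂ :=
  k / (2 * π * I * s) * cexp (I * k * (‖y‖ : ℂ) ^ 2 / (2 * s))

lemma mul_parabolicGreen_sqrt_smul (k : ℂ) {s : ℝ} (hs : 0 < s) (x : 𝕍) :
    s * parabolicGreen k s (√s • x) = parabolicGreen k 1 x := by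
  have hs' : (s : ℂ) ≠ 0 := by exact_mod_cast hs.ne'
  have hsqrt : ((√s : ℝ) : ℂ) ^ 2 = s := by exact_mod_cast Real.sq_sqrt hs.le
  simp only [parabolicGreen, norm_smul, Real.norm_eq_abs, abs_of_nonneg (Real.sqrt_nonneg s),
    ofReal_mul, mul_pow, hsqrt, ofReal_one, mul_one]
  field_simp

lemma parabolicGreen_one_eq (k : ℂ) (x : 𝕍) :
    parabolicGreen k 1 x = k / (2 * π * I) * cexp (-(-(I * k / 2)) * (‖x‖ : ℂ) ^ 2) := by
  simp only [parabolicGreen, ofReal_one, mul_one]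
  ring_nf

variable {k : ℂ}

lemma re_neg_I_mul_div_two_pos (hk : 0 < k.im) : 0 < (-(I * k / 2)).re := by
  simp only [neg_re, div_ofNat_re, mul_re, I_re, zero_mul, I_im, one_mul, zero_sub,
    Left.neg_pos_iff]
  linarith

lemma integrable_parabolicGreen_one (hk : 0 < k.im) : Integrable (parabolicGreen k 1) := by
  have hb := re_neg_I_mul_div_two_pos hk
  simp_rw [funext (parabolicGreen_one_eq k)]
  refine Integrable.const_mul ?_ _
  simpa using GaussianFourier.integrable_cexp_neg_mul_sq_norm_add hb 0 (0 : 𝕍)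

lemma integral_parabolicGreen_one (hk : 0 < k.im) : ∫ x, parabolicGreen k 1 x = 1 := by
  have hb := re_neg_I_mul_div_two_pos hk
  have hk0 : k ≠ 0 := by rintro rfl; simp at hk
  simp_rw [parabolicGreen_one_eq, integral_const_mul,
    GaussianFourier.integral_cexp_neg_mul_sq_norm hb, finrank_euclideanSpace_fin]
  rw [Nat.cast_ofNat, div_self two_ne_zero, cpow_one]
  field_simp
  rw [I_sq]

lemma integral_parabolicGreen_sub_mul_eq (k : ℂ) (φ : 𝕍 → ℂ) (ys : 𝕍) {s : ℝ} (hs : 0 < s) :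
    ∫ y, parabolicGreen k s (y - ys) * φ y = ∫ x, parabolicGreen k 1 x * φ (ys + √s • x) := by
  rw [integral_eq_pow_smul_integral_comp_add_smul volume _ ys (Real.sqrt_pos.2 hs),
    finrank_euclideanSpace_fin, Real.sq_sqrt hs.le, ← integral_smul]
  congr 1 with x
  rw [add_sub_cancel_left, ← mul_parabolicGreen_sqrt_smul k hs, real_smul, mul_assoc]

/-- The parabolic Green's function acts as an approximate identity as the
observation plane approaches the source plane. -/
theorem parabolic_green_approximate_identity
    (k : ℂ) (hk : 0 < k.im)
    (ys : EuclideanSpace ℝ (Fin 2))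
    (φ : EuclideanSpace ℝ (Fin 2) → ℂ)
    (hφc : Continuous φ) (hφb : ∃ C : ℝ, ∀ y, ‖φ y‖ ≤ C) :
    Filter.Tendsto
      (fun s : ℝ =>
        ∫ y : EuclideanSpace ℝ (Fin 2),
          k / (2 * Real.pi * Complex.I * s) *
            Complex.exp (Complex.I * k * (‖y - ys‖ : ℂ) ^ 2 / (2 * s)) * φ y)
      (nhdsWithin 0 (Set.Ioi 0)) (nhds (φ ys)) := by
  obtain ⟨C, hC⟩ := hφb
  have hsqrt : Tendsto (fun s : ℝ => √s) (𝓝[>] 0) (𝓝 0) := by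
    simpa using (Real.continuous_sqrt.tendsto 0).mono_left nhdsWithin_le_nhds
  have hlim := (tendsto_integral_mul_comp_add_smul (integrable_parabolicGreen_one hk) hφc hC
    ys).comp hsqrt
  rw [integral_parabolicGreen_one hk, one_mul] at hlim
  refine hlim.congr' (eventually_nhdsWithin_of_forall fun s hs => ?_)
  exact (integral_parabolicGreen_sub_mul_eq k φ ys hs).symm
end

section
/- Let k and α be nonzero complex numbers and let B : ℂ → ℂ be an arbitrary function. For 0 < x < x*, set τ = 1/x, τ* = 1/x*, ζ(τ) = (k/τ) exp( −i k α² / (2τ) ), and G(ξ) = i k α² ξ^{−2} exp( i k α² / ξ ) B( k α² / ξ ). Then i k α² x* x / (x* − x)² · exp( (i k α² / 2) (x*² + x²)/(x* − x) ) · B( k α² x* x / (x* − x) ) = τ² ζ(τ) ζ(τ*)^{−1} G(τ − τ*). (The Volterra kernel of the cone problem factorizes into a difference kernel under the substitution τ = 1/x.) -/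
open Complex Real

/-- The Volterra kernel of the cone problem factorizes into a difference
kernel under the substitution `τ = 1/x`. -/
theorem cone_kernel_difference_factorization
    (k α : ℂ) (hk : k ≠ 0) (hα : α ≠ 0)
    (B : ℂ → ℂ)
    (x xstar : ℝ) (hx : 0 < x) (hxx : x < xstar)
    (τ τstar : ℝ) (hτ : τ = 1 / x) (hτstar : τstar = 1 / xstar)
    (ζ : ℝ → ℂ)
    (hζ : ∀ t : ℝ, ζ t = k / t * Complex.exp (-Complex.I * k * α ^ 2 / (2 * t)))
    (G : ℝ → ℂ)
    (hG : ∀ ξ : ℝ, G ξ = Complex.I * k * α ^ 2 * ((ξ : ℂ)) ^ (-2 : ℤ) *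
      Complex.exp (Complex.I * k * α ^ 2 / ξ) * B (k * α ^ 2 / ξ)) :
    Complex.I * k * α ^ 2 * xstar * x / ((xstar : ℂ) - x) ^ 2 *
        Complex.exp (Complex.I * k * α ^ 2 / 2 *
          ((xstar : ℂ) ^ 2 + (x : ℂ) ^ 2) / ((xstar : ℂ) - x)) *
        B (k * α ^ 2 * xstar * x / ((xstar : ℂ) - x)) =
      (τ : ℂ) ^ 2 * ζ τ * (ζ τstar)⁻¹ * G (τ - τstar) := by
  subst hτ hτstar
  have hxr : x ≠ 0 := hx.ne'
  have hsr : xstar ≠ 0 := (hx.trans hxx).ne'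
  have hx0 : (x:ℂ) ≠ 0 := by exact_mod_cast hxr
  have hs0 : (xstar:ℂ) ≠ 0 := by exact_mod_cast hsr
  have hd0 : (xstar:ℂ) - (x:ℂ) ≠ 0 := by
    have : (x:ℂ) ≠ (xstar:ℂ) := by exact_mod_cast hxx.ne
    exact sub_ne_zero.mpr (Ne.symm this)
  rw [hζ, hζ, hG]
  have hξ : ((1/x - 1/xstar : ℝ) : ℂ) = ((xstar:ℂ) - x)/((x:ℂ)*xstar) := by
    push_cast
    field_simp
  rw [hξ]
  have htx : ((1/x : ℝ) : ℂ) = ((x:ℂ))⁻¹ := by push_cast; ring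
  have hts : ((1/xstar : ℝ) : ℂ) = ((xstar:ℂ))⁻¹ := by push_cast; ring
  rw [htx, hts]
  rw [mul_inv, ← Complex.exp_neg]
  have hBarg : k * α ^ 2 / (((xstar:ℂ) - x)/((x:ℂ)*xstar)) =
      k * α ^ 2 * xstar * x / ((xstar : ℂ) - x) := by
    field_simp
  rw [hBarg]
  have hE : Complex.exp (-Complex.I * k * α ^ 2 / (2 * ((x:ℂ))⁻¹)) *
      Complex.exp (-(-Complex.I * k * α ^ 2 / (2 * ((xstar:ℂ))⁻¹))) *
      Complex.exp (Complex.I * k * α ^ 2 / (((xstar:ℂ) - x)/((x:ℂ)*xstar))) =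
      Complex.exp (Complex.I * k * α ^ 2 / 2 *
          ((xstar : ℂ) ^ 2 + (x : ℂ) ^ 2) / ((xstar : ℂ) - x)) := by
    rw [← Complex.exp_add, ← Complex.exp_add]
    congr 1
    field_simp
    ring
  calc Complex.I * k * α ^ 2 * xstar * x / ((xstar : ℂ) - x) ^ 2 *
        Complex.exp (Complex.I * k * α ^ 2 / 2 *
          ((xstar : ℂ) ^ 2 + (x : ℂ) ^ 2) / ((xstar : ℂ) - x)) *
        B (k * α ^ 2 * xstar * x / ((xstar : ℂ) - x))
      = (((x:ℂ))⁻¹ ^ 2 * (k / ((x:ℂ))⁻¹) * (k / ((xstar:ℂ))⁻¹)⁻¹ *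
          (Complex.I * k * α ^ 2 * (((xstar:ℂ) - x)/((x:ℂ)*xstar)) ^ (-2:ℤ))) *
        (Complex.exp (-Complex.I * k * α ^ 2 / (2 * ((x:ℂ))⁻¹)) *
          Complex.exp (-(-Complex.I * k * α ^ 2 / (2 * ((xstar:ℂ))⁻¹))) *
          Complex.exp (Complex.I * k * α ^ 2 / (((xstar:ℂ) - x)/((x:ℂ)*xstar)))) *
        B (k * α ^ 2 * xstar * x / ((xstar : ℂ) - x)) := by
        rw [hE]
        congr 2
        rw [zpow_neg, zpow_two]
        field_simp
    _ = _ := by ring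
end

section
/- Let k and α be nonzero complex numbers, X > 0, and let K₀ : {(x*, x) : 0 < x < x*} → ℂ, ζ(τ) = (k/τ) exp(−ikα²/(2τ)), and G : (0, ∞) → ℂ satisfy K₀(x*, x) = τ² ζ(τ) ζ(τ*)^{−1} G(τ − τ*) with τ = 1/x, τ* = 1/x*. Suppose U : (0, X] → ℂ is continuous, x ↦ K₀(x*, x) U(x) is integrable on (0, x*) for each x* ∈ (0, X], and U satisfies the Volterra equation U(x*) = ∫₀^{x*} K₀(x*, x) U(x) dx + 2 for all x* ∈ (0, X]. Then the function V(τ) = ζ(τ) U(1/τ), defined for τ ≥ 1/X, satisfies the convolution equation V(τ*) = ∫_{τ*}^{∞} G(τ − τ*) V(τ) dτ + 2 ζ(τ*) for all τ* ≥ 1/X. -/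
/-!
Substituting `x = 1/τ`, `dx = dτ/τ²`, in the Volterra integral at `x* = 1/τ*` absorbs the
factor `τ²` of the kernel, and the factor `ζ(τ)` turns `U(1/τ)` into `V(τ)`. Multiplying the
equation by `ζ(τ*)`, which is nonzero, cancels the remaining factor `ζ(τ*)⁻¹`.
-/

open Complex MeasureTheory Set

theorem setIntegral_Ioo_zero_eq_setIntegral_Ioi_inv {E : Type*} [NormedAddCommGroup E]
    [NormedSpace ℝ E] {a : ℝ} (ha : 0 < a) (f : ℝ → E) :
    ∫ x in Ioo 0 a⁻¹, f x = ∫ τ in Ioi a, (τ ^ 2)⁻¹ • f τ⁻¹ := by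
  have himage : Inv.inv '' Ioi a = Ioo 0 a⁻¹ := by
    rw [image_inv_eq_inv, inv_Ioi₀ ha]
  have hderiv : ∀ τ ∈ Ioi a, HasDerivWithinAt Inv.inv (-(τ ^ 2)⁻¹) (Ioi a) τ :=
    fun τ hτ => (hasDerivAt_inv (ha.trans hτ).ne').hasDerivWithinAt
  rw [← himage, integral_image_eq_integral_abs_deriv_smul measurableSet_Ioi hderiv
    inv_injective.injOn]
  simp only [abs_neg, abs_inv, abs_pow, sq_abs]

section

variable {K₀ : ℝ → ℝ → ℂ} {G ζ U : ℝ → ℂ}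

theorem setIntegral_volterra_eq_setIntegral_convolution
    (hfact : ∀ xstar x : ℝ, 0 < x → x < xstar →
      K₀ xstar x = ((1 / x : ℝ) : ℂ) ^ 2 * ζ (1 / x) * (ζ (1 / xstar))⁻¹ *
        G (1 / x - 1 / xstar))
    {τstar : ℝ} (hτstar : 0 < τstar) :
    ∫ x in Ioo 0 (1 / τstar), K₀ (1 / τstar) x * U x =
      (ζ τstar)⁻¹ * ∫ τ in Ioi τstar, G (τ - τstar) * (ζ τ * U (1 / τ)) := by
  rw [one_div, setIntegral_Ioo_zero_eq_setIntegral_Ioi_inv hτstar, ← integral_const_mul]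
  refine setIntegral_congr_fun measurableSet_Ioi fun τ hτ => ?_
  have hτ0 : 0 < τ := hτstar.trans hτ
  rw [hfact _ _ (inv_pos.2 hτ0) (inv_strictAnti₀ hτstar hτ)]
  simp only [one_div, inv_inv, Complex.real_smul]
  have : (τ : ℂ) ≠ 0 := by exact_mod_cast hτ0.ne'
  push_cast
  field_simp

theorem convolution_eq_of_volterra_eq
    (hfact : ∀ xstar x : ℝ, 0 < x → x < xstar →
      K₀ xstar x = ((1 / x : ℝ) : ℂ) ^ 2 * ζ (1 / x) * (ζ (1 / xstar))⁻¹ *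
        G (1 / x - 1 / xstar))
    {τstar : ℝ} (hτstar : 0 < τstar) (hζ : ζ τstar ≠ 0)
    (heq : U (1 / τstar) = (∫ x in Ioo 0 (1 / τstar), K₀ (1 / τstar) x * U x) + 2) :
    ζ τstar * U (1 / τstar) =
      (∫ τ in Ioi τstar, G (τ - τstar) * (ζ τ * U (1 / τ))) + 2 * ζ τstar := by
  rw [heq, setIntegral_volterra_eq_setIntegral_convolution hfact hτstar, mul_add,
    mul_inv_cancel_left₀ hζ, mul_comm]

end

theorem cone_volterra_to_convolution_general
    (k α : ℂ) (hk : k ≠ 0) (X : ℝ) (hX : 0 < X)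
    (K₀ : ℝ → ℝ → ℂ) (G : ℝ → ℂ)
    (ζ : ℝ → ℂ)
    (hζ : ∀ t : ℝ, ζ t = k / t * Complex.exp (-Complex.I * k * α ^ 2 / (2 * t)))
    (hfact : ∀ xstar x : ℝ, 0 < x → x < xstar →
      K₀ xstar x = ((1 / x : ℝ) : ℂ) ^ 2 * ζ (1 / x) * (ζ (1 / xstar))⁻¹ *
        G (1 / x - 1 / xstar))
    (U : ℝ → ℂ)
    (heq : ∀ xstar ∈ Set.Ioc (0:ℝ) X,
      U xstar = (∫ x in Set.Ioo 0 xstar, K₀ xstar x * U x) + 2)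
    (V : ℝ → ℂ) (hV : ∀ τ : ℝ, V τ = ζ τ * U (1 / τ)) :
    ∀ τstar : ℝ, 1 / X ≤ τstar →
      V τstar = (∫ τ in Set.Ioi τstar, G (τ - τstar) * V τ) + 2 * ζ τstar := by
  intro τstar hτstar
  have hτ0 : 0 < τstar := (one_div_pos.2 hX).trans_le hτstar
  have hx : 1 / τstar ∈ Set.Ioc 0 X :=
    ⟨one_div_pos.2 hτ0, (one_div_le hτ0 hX).2 hτstar⟩
  have hζ0 : ζ τstar ≠ 0 := by
    rw [hζ]
    exact mul_ne_zero (div_ne_zero hk (ofReal_ne_zero.2 hτ0.ne')) (Complex.exp_ne_zero _)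
  simp only [hV]
  exact convolution_eq_of_volterra_eq hfact hτ0 hζ0 (heq _ hx)

/-- Under the substitution `τ = 1/x`, the Volterra integral equation of the
cone problem becomes an integral equation of convolution type. -/
theorem cone_volterra_to_convolution
    (k α : ℂ) (hk : k ≠ 0) (hα : α ≠ 0) (X : ℝ) (hX : 0 < X)
    (K₀ : ℝ → ℝ → ℂ) (G : ℝ → ℂ)
    (ζ : ℝ → ℂ)
    (hζ : ∀ t : ℝ, ζ t = k / t * Complex.exp (-Complex.I * k * α ^ 2 / (2 * t)))
    (hfact : ∀ xstar x : ℝ, 0 < x → x < xstar →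
      K₀ xstar x = ((1 / x : ℝ) : ℂ) ^ 2 * ζ (1 / x) * (ζ (1 / xstar))⁻¹ *
        G (1 / x - 1 / xstar))
    (U : ℝ → ℂ)
    (hUc : ContinuousOn U (Set.Ioc 0 X))
    (hUint : ∀ xstar ∈ Set.Ioc (0:ℝ) X,
      IntegrableOn (fun x => K₀ xstar x * U x) (Set.Ioo 0 xstar))
    (heq : ∀ xstar ∈ Set.Ioc (0:ℝ) X,
      U xstar = (∫ x in Set.Ioo 0 xstar, K₀ xstar x * U x) + 2)
    (V : ℝ → ℂ) (hV : ∀ τ : ℝ, V τ = ζ τ * U (1 / τ)) :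
    ∀ τstar : ℝ, 1 / X ≤ τstar →
      V τstar = (∫ τ in Set.Ioi τstar, G (τ - τstar) * V τ) + 2 * ζ τstar :=
  cone_volterra_to_convolution_general k α hk X hX K₀ G ζ hζ hfact U heq V hV
end
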